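/- Lemma (deterministic form of the stopping-threshold bound): Let π be any policy that is greedy with respect to the optimistic Q-values, i.e., π_h(s) ∈ argmax_{a∈A} Q̄_h(s,a) for all h ∈ {1,...,H} and s ∈ S. Then max_{a∈A} Q̄_1(s1,a) − max_{a∈A} Qlow_1(s1,a) ≤ 3 Σ_{h=1}^{H} Σ_{s∈S} Σ_{a∈A} p^π_h(s,a) · b_h(s,a). -/

import Mathlib

/-- A finite episodic MDP with horizon `H`, initial state `s1`,
transition kernel `p h s a s'` and mean rewards `r h s a` (for stages `h ∈ {1,…,H}`). -/
structure MDP (S A : Type) [Fintype S] [Fintype A] where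
  H : ℕ
  H_pos : 1 ≤ H
  s1 : S
  p : ℕ → S → A → S → ℝ
  r : ℕ → S → A → ℝ
  p_nonneg : ∀ h s a s', 1 ≤ h → h ≤ H → 0 ≤ p h s a s'
  p_sum_one : ∀ h s a, 1 ≤ h → h ≤ H → ∑ s' : S, p h s a s' = 1
  r_nonneg : ∀ h s a, 1 ≤ h → h ≤ H → 0 ≤ r h s a
  r_le_one : ∀ h s a, 1 ≤ h → h ≤ H → r h s a ≤ 1

namespace MDP

variable {S A : Type} [Fintype S] [Fintype A] [DecidableEq S] [DecidableEq A]
variable (M : MDP S A)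

/-- Fuel-indexed value of policy `π`: `polValAux M π k s = V^π_{H+1-k}(s)`. -/
noncomputable def polValAux (π : ℕ → S → A) : ℕ → S → ℝ
  | 0, _ => 0
  | k + 1, s =>
      M.r (M.H - k) s (π (M.H - k) s) +
        ∑ s' : S, M.p (M.H - k) s (π (M.H - k) s) s' * polValAux π k s'

/-- `V^π_h(s)`, for `1 ≤ h ≤ H + 1`. -/
noncomputable def polVal (π : ℕ → S → A) (h : ℕ) (s : S) : ℝ :=
  M.polValAux π (M.H + 1 - h) s

/-- `Q^π_h(s,a)`. -/
noncomputable def polQ (π : ℕ → S → A) (h : ℕ) (s : S) (a : A) : ℝ :=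
  M.r h s a + ∑ s' : S, M.p h s a s' * M.polVal π (h + 1) s'

/-- Fuel-indexed optimal value: `optValAux M k s = V*_{H+1-k}(s)`. -/
noncomputable def optValAux : ℕ → S → ℝ
  | 0, _ => 0
  | k + 1, s =>
      ⨆ a : A, (M.r (M.H - k) s a + ∑ s' : S, M.p (M.H - k) s a s' * optValAux k s')

/-- `V*_h(s)`, for `1 ≤ h ≤ H + 1`. -/
noncomputable def optVal (h : ℕ) (s : S) : ℝ := M.optValAux (M.H + 1 - h) s

/-- `Q*_h(s,a)`. -/
noncomputable def optQ (h : ℕ) (s : S) (a : A) : ℝ :=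
  M.r h s a + ∑ s' : S, M.p h s a s' * M.optVal (h + 1) s'

/-- Visitation probability `p^π_h(s)`, for `1 ≤ h ≤ H`. -/
noncomputable def visit (π : ℕ → S → A) : ℕ → S → ℝ
  | 0, _ => 0
  | 1, s => if s = M.s1 then 1 else 0
  | h + 2, s' => ∑ s : S, visit π (h + 1) s * M.p (h + 1) s (π (h + 1) s) s'

/-- State-action visitation probability `p^π_h(s,a)`. -/
noncomputable def visitSA (π : ℕ → S → A) (h : ℕ) (s : S) (a : A) : ℝ :=
  if π h s = a then M.visit π h s else 0

/-- Fuel-indexed conditional visitation: `cvisitAux M π s h k s' = p^π_{h+k}(s' | s, h)`. -/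
noncomputable def cvisitAux (π : ℕ → S → A) (s : S) (h : ℕ) : ℕ → S → ℝ
  | 0, s' => if s' = s then 1 else 0
  | k + 1, s' =>
      ∑ s'' : S, cvisitAux π s h k s'' * M.p (h + k) s'' (π (h + k) s'') s'

/-- Conditional visitation probability `p^π_ℓ(s' | s, h)`, for `h ≤ ℓ`. -/
noncomputable def cvisit (π : ℕ → S → A) (s : S) (h ℓ : ℕ) (s' : S) : ℝ :=
  M.cvisitAux π s h (ℓ - h) s'

/-- Value gap `Δ_h(s,a) = V*_h(s) - Q*_h(s,a)`. -/
noncomputable def valGap (h : ℕ) (s : S) (a : A) : ℝ := M.optVal h s - M.optQ h s a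

/-- The worst conditional value loss of policy `π`:
`max_{ℓ ∈ [H]} max_{s' : p^π_ℓ(s') > 0} (V*_ℓ(s') - V^π_ℓ(s'))`. -/
noncomputable def condRetGap (π : ℕ → S → A) : ℝ :=
  sSup {x : ℝ | ∃ ℓ, 1 ≤ ℓ ∧ ℓ ≤ M.H ∧ ∃ s' : S,
    M.visit π ℓ s' > 0 ∧ x = M.optVal ℓ s' - M.polVal π ℓ s'}

/-- Conditional return gap `Δtilde_h(s,a)`. -/
noncomputable def tildeGap (h : ℕ) (s : S) (a : A) : ℝ :=
  sInf {x : ℝ | ∃ π : ℕ → S → A, M.visitSA π h s a > 0 ∧ x = M.condRetGap π}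

/-- Return gap `Δbar_h(s,a) = V*_1(s1) - max_{π : p^π_h(s,a) > 0} V^π_1(s1)`. -/
noncomputable def barGap (h : ℕ) (s : S) (a : A) : ℝ :=
  M.optVal 1 M.s1 -
    sSup {x : ℝ | ∃ π : ℕ → S → A, M.visitSA π h s a > 0 ∧ x = M.polVal π 1 M.s1}

end MDP
namespace MDP

section Estimates

variable {S A : Type} [Fintype S] [Fintype A] [DecidableEq S] [DecidableEq A] [Nonempty A]
variable (M : MDP S A)
variable (rhat : ℕ → S → A → ℝ) (phat : ℕ → S → A → S → ℝ) (b : ℕ → S → A → ℝ)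

/-- Fuel-indexed optimistic value: `VbarAux M rhat phat b k s = V̄_{H+1-k}(s)`. -/
noncomputable def VbarAux : ℕ → S → ℝ
  | 0, _ => 0
  | k + 1, s => ⨆ a : A, min ((k : ℝ) + 1)
      (rhat (M.H - k) s a + b (M.H - k) s a +
        ∑ s' : S, phat (M.H - k) s a s' * VbarAux k s')

/-- Optimistic value `V̄_h(s)`, for `1 ≤ h ≤ H + 1`. -/
noncomputable def Vbar (h : ℕ) (s : S) : ℝ := VbarAux M rhat phat b (M.H + 1 - h) s

/-- Optimistic Q-value `Q̄_h(s,a)`. -/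
noncomputable def Qbar (h : ℕ) (s : S) (a : A) : ℝ :=
  min ((M.H : ℝ) - h + 1)
    (rhat h s a + b h s a + ∑ s' : S, phat h s a s' * Vbar M rhat phat b (h + 1) s')

/-- Fuel-indexed pessimistic value: `VlowAux M rhat phat b k s = Vlow_{H+1-k}(s)`. -/
noncomputable def VlowAux : ℕ → S → ℝ
  | 0, _ => 0
  | k + 1, s => ⨆ a : A, max 0
      (rhat (M.H - k) s a - b (M.H - k) s a +
        ∑ s' : S, phat (M.H - k) s a s' * VlowAux k s')

/-- Pessimistic value `Vlow_h(s)`, for `1 ≤ h ≤ H + 1`. -/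
noncomputable def Vlow (h : ℕ) (s : S) : ℝ := VlowAux M rhat phat b (M.H + 1 - h) s

/-- Pessimistic Q-value `Qlow_h(s,a)`. -/
noncomputable def Qlow (h : ℕ) (s : S) (a : A) : ℝ :=
  max 0 (rhat h s a - b h s a + ∑ s' : S, phat h s a s' * Vlow M rhat phat b (h + 1) s')

variable (π : ℕ → S → A)

/-- Fuel-indexed policy-specific optimistic value `V̄^π`. -/
noncomputable def VbarPolAux : ℕ → S → ℝ
  | 0, _ => 0
  | k + 1, s => min ((k : ℝ) + 1)
      (rhat (M.H - k) s (π (M.H - k) s) + b (M.H - k) s (π (M.H - k) s) +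
        ∑ s' : S, phat (M.H - k) s (π (M.H - k) s) s' * VbarPolAux k s')

/-- Policy-specific optimistic value `V̄^π_h(s)`. -/
noncomputable def VbarPol (h : ℕ) (s : S) : ℝ := VbarPolAux M rhat phat b π (M.H + 1 - h) s

/-- Policy-specific optimistic Q-value `Q̄^π_h(s,a)`. -/
noncomputable def QbarPol (h : ℕ) (s : S) (a : A) : ℝ :=
  min ((M.H : ℝ) - h + 1)
    (rhat h s a + b h s a + ∑ s' : S, phat h s a s' * VbarPol M rhat phat b π (h + 1) s')

/-- Fuel-indexed policy-specific pessimistic value `Vlow^π`. -/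
noncomputable def VlowPolAux : ℕ → S → ℝ
  | 0, _ => 0
  | k + 1, s => max 0
      (rhat (M.H - k) s (π (M.H - k) s) - b (M.H - k) s (π (M.H - k) s) +
        ∑ s' : S, phat (M.H - k) s (π (M.H - k) s) s' * VlowPolAux k s')

/-- Policy-specific pessimistic value `Vlow^π_h(s)`. -/
noncomputable def VlowPol (h : ℕ) (s : S) : ℝ := VlowPolAux M rhat phat b π (M.H + 1 - h) s

/-- Policy-specific pessimistic Q-value `Qlow^π_h(s,a)`. -/
noncomputable def QlowPol (h : ℕ) (s : S) (a : A) : ℝ :=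
  max 0 (rhat h s a - b h s a + ∑ s' : S, phat h s a s' * VlowPol M rhat phat b π (h + 1) s')

end Estimates

end MDP

/-!
Write `D_h = V̄_h - Vlow_h`. For the greedy action `a = π_h(s)` we have `V̄_h(s) = Q̄_h(s,a)`
and `Vlow_h(s) ≥ Qlow_h(s,a)`, so `D_h(s) ≤ 2 b_h(s,a) + Σ p̂_h(s'|s,a) D_{h+1}(s')`. Since
`r ∈ [0,1]` and `|r̂ - r| ≤ b`, both value functions at stage `h + 1` lie in `[0, H - h]`, so
replacing `p̂_h` by `p_h` costs at most `(H - h) ‖p̂_h - p_h‖₁ ≤ b_h(s,a)`. The resulting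
inequality `D_h(s) ≤ 3 b_h(s,π_h(s)) + Σ p_h(s'|s,π_h(s)) D_{h+1}(s')` telescopes along the
visitation probabilities of `π`, starting from `D_{H+1} = 0`.
-/

open Finset

lemma sum_mul_le_sum_mul_add_mul_sum_abs_sub {ι : Type*} (s : Finset ι) {q p f : ι → ℝ}
    {c : ℝ} (hf : ∀ i ∈ s, |f i| ≤ c) :
    ∑ i ∈ s, q i * f i ≤ ∑ i ∈ s, p i * f i + c * ∑ i ∈ s, |q i - p i| := by
  rw [← sub_le_iff_le_add', ← sum_sub_distrib, mul_sum]
  refine sum_le_sum fun i hi => ?_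
  calc q i * f i - p i * f i ≤ |(q i - p i) * f i| := by rw [← sub_mul]; exact le_abs_self _
    _ = |q i - p i| * |f i| := abs_mul _ _
    _ ≤ c * |q i - p i| := by
      rw [mul_comm]; exact mul_le_mul_of_nonneg_right (hf i hi) (abs_nonneg _)

namespace MDP

section Visitation

variable {S A : Type} [Fintype S] [Fintype A] [DecidableEq S] (M : MDP S A) (π : ℕ → S → A)

lemma visit_one (s : S) : M.visit π 1 s = if s = M.s1 then 1 else 0 := rfl

lemma visit_succ {h : ℕ} (hh : 1 ≤ h) (s' : S) :
    M.visit π (h + 1) s' = ∑ s : S, M.visit π h s * M.p h s (π h s) s' := by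
  obtain ⟨h, rfl⟩ := Nat.exists_eq_add_of_le' hh
  rfl

lemma visit_nonneg {h : ℕ} (hh : h ≤ M.H + 1) (s : S) : 0 ≤ M.visit π h s := by
  induction h generalizing s with
  | zero => exact le_rfl
  | succ h ih =>
    rcases Nat.eq_zero_or_pos h with rfl | hpos
    · rw [visit_one]; split_ifs <;> norm_num
    · rw [M.visit_succ π hpos]
      exact sum_nonneg fun s' _ =>
        mul_nonneg (ih (by omega) s') (M.p_nonneg _ _ _ _ hpos (by omega))

lemma sum_visit_one_mul (f : S → ℝ) : ∑ s : S, M.visit π 1 s * f s = f M.s1 := by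
  simp [visit_one, ite_mul]

lemma sum_visit_succ_mul {h : ℕ} (hh : 1 ≤ h) (f : S → ℝ) :
    ∑ s' : S, M.visit π (h + 1) s' * f s' =
      ∑ s : S, M.visit π h s * ∑ s' : S, M.p h s (π h s) s' * f s' := by
  simp_rw [M.visit_succ π hh, sum_mul, mul_sum, mul_assoc]
  exact sum_comm

lemma sum_visitSA_mul [DecidableEq A] (h : ℕ) (s : S) (f : A → ℝ) :
    ∑ a : A, M.visitSA π h s a * f a = M.visit π h s * f (π h s) := by
  simp [visitSA, ite_mul]

lemma sum_visit_mul_le_of_bellman_le (D c : ℕ → S → ℝ) (hD : ∀ s, D (M.H + 1) s ≤ 0)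
    (hbellman : ∀ h s, 1 ≤ h → h ≤ M.H →
      D h s ≤ c h s + ∑ s' : S, M.p h s (π h s) s' * D (h + 1) s')
    {h : ℕ} (h1 : 1 ≤ h) (hh : h ≤ M.H + 1) :
    ∑ s : S, M.visit π h s * D h s ≤
      ∑ ℓ ∈ Icc h M.H, ∑ s : S, M.visit π ℓ s * c ℓ s := by
  induction hh using Nat.decreasingInduction with
  | self =>
    rw [Icc_eq_empty (by omega), sum_empty]
    exact sum_nonpos fun s _ =>
      mul_nonpos_of_nonneg_of_nonpos (M.visit_nonneg π le_rfl s) (hD s)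
  | of_succ k hk ih =>
    calc ∑ s : S, M.visit π k s * D k s
        ≤ ∑ s : S, M.visit π k s * (c k s + ∑ s' : S, M.p k s (π k s) s' * D (k + 1) s') :=
          sum_le_sum fun s _ => mul_le_mul_of_nonneg_left (hbellman k s h1 (by omega))
            (M.visit_nonneg π hk.le s)
      _ = ∑ s : S, M.visit π k s * c k s + ∑ s' : S, M.visit π (k + 1) s' * D (k + 1) s' := by
          rw [M.sum_visit_succ_mul π h1, ← sum_add_distrib]
          simp_rw [mul_add]
      _ ≤ ∑ s : S, M.visit π k s * c k s +
            ∑ ℓ ∈ Icc (k + 1) M.H, ∑ s : S, M.visit π ℓ s * c ℓ s := by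
          gcongr; exact ih (by omega)
      _ = ∑ ℓ ∈ Icc k M.H, ∑ s : S, M.visit π ℓ s * c ℓ s := by
          rw [← insert_Icc_add_one_left_eq_Icc (by omega : k ≤ M.H), sum_insert (by simp)]

end Visitation

section Estimates

variable {S A : Type} [Fintype S] [Fintype A] (M : MDP S A)
variable (rhat : ℕ → S → A → ℝ) (phat : ℕ → S → A → S → ℝ) (b : ℕ → S → A → ℝ)

lemma Vbar_eq_iSup_Qbar {h : ℕ} (hh : h ≤ M.H) (s : S) :
    Vbar M rhat phat b h s = ⨆ a : A, Qbar M rhat phat b h s a := by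
  have hcast : ((M.H - h : ℕ) : ℝ) + 1 = (M.H : ℝ) - h + 1 := by
    push_cast [Nat.cast_sub hh]; ring
  rw [Vbar, show M.H + 1 - h = M.H - h + 1 by omega, VbarAux, Nat.sub_sub_self hh, hcast]
  simp only [Qbar, Vbar, show M.H + 1 - (h + 1) = M.H - h by omega]

lemma Vlow_eq_iSup_Qlow {h : ℕ} (hh : h ≤ M.H) (s : S) :
    Vlow M rhat phat b h s = ⨆ a : A, Qlow M rhat phat b h s a := by
  rw [Vlow, show M.H + 1 - h = M.H - h + 1 by omega, VlowAux, Nat.sub_sub_self hh]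
  simp only [Qlow, Vlow, show M.H + 1 - (h + 1) = M.H - h by omega]

lemma Vbar_H_succ (s : S) : Vbar M rhat phat b (M.H + 1) s = 0 := by
  simp [Vbar, VbarAux]

lemma Vlow_H_succ (s : S) : Vlow M rhat phat b (M.H + 1) s = 0 := by
  simp [Vlow, VlowAux]

lemma VbarAux_le [Nonempty A] (k : ℕ) (s : S) : VbarAux M rhat phat b k s ≤ k := by
  cases k with
  | zero => simp [VbarAux]
  | succ k => exact ciSup_le fun a => by push_cast; exact min_le_left _ _

lemma VlowAux_nonneg (k : ℕ) (s : S) : 0 ≤ VlowAux M rhat phat b k s := by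
  cases k with
  | zero => simp [VlowAux]
  | succ k => exact Real.iSup_nonneg fun a => le_max_left _ _

variable {M rhat phat b}

lemma VbarAux_nonneg [Nonempty A]
    (hphat_nonneg : ∀ h s a s', 1 ≤ h → h ≤ M.H → 0 ≤ phat h s a s')
    (hrb : ∀ h s a, 1 ≤ h → h ≤ M.H → 0 ≤ rhat h s a + b h s a)
    {k : ℕ} (hk : k ≤ M.H) (s : S) : 0 ≤ VbarAux M rhat phat b k s := by
  induction k generalizing s with
  | zero => simp [VbarAux]
  | succ k ih =>
    obtain ⟨a⟩ := ‹Nonempty A›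
    have hsum : 0 ≤ ∑ s' : S, phat (M.H - k) s a s' * VbarAux M rhat phat b k s' :=
      sum_nonneg fun s' _ =>
        mul_nonneg (hphat_nonneg _ _ _ _ (by omega) (by omega)) (ih (by omega) s')
    exact le_ciSup_of_le (Finite.bddAbove_range _) a
      (le_min (by positivity) (add_nonneg (hrb _ _ _ (by omega) (by omega)) hsum))

lemma VlowAux_le [Nonempty A]
    (hphat_nonneg : ∀ h s a s', 1 ≤ h → h ≤ M.H → 0 ≤ phat h s a s')
    (hphat_sum : ∀ h s a, 1 ≤ h → h ≤ M.H → ∑ s' : S, phat h s a s' = 1)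
    (hrb : ∀ h s a, 1 ≤ h → h ≤ M.H → rhat h s a - b h s a ≤ 1)
    {k : ℕ} (hk : k ≤ M.H) (s : S) : VlowAux M rhat phat b k s ≤ k := by
  induction k generalizing s with
  | zero => simp [VlowAux]
  | succ k ih =>
    refine ciSup_le fun a => max_le (by positivity) ?_
    have hsum : ∑ s' : S, phat (M.H - k) s a s' * VlowAux M rhat phat b k s' ≤ k :=
      calc ∑ s' : S, phat (M.H - k) s a s' * VlowAux M rhat phat b k s'
          ≤ ∑ s' : S, phat (M.H - k) s a s' * k :=
            sum_le_sum fun s' _ =>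
              mul_le_mul_of_nonneg_left (ih (by omega) s')
                (hphat_nonneg _ _ _ _ (by omega) (by omega))
        _ = k := by rw [← sum_mul, hphat_sum _ _ _ (by omega) (by omega), one_mul]
    push_cast
    linarith [hrb (M.H - k) s a (by omega) (by omega)]

lemma abs_rhat_sub_r_le_of_conc
    (hconc : ∀ h s a, 1 ≤ h → h ≤ M.H →
      |rhat h s a - M.r h s a| +
        ((M.H : ℝ) - h) * ∑ s' : S, |phat h s a s' - M.p h s a s'| ≤ b h s a)
    {h : ℕ} (h1 : 1 ≤ h) (hh : h ≤ M.H) (s : S) (a : A) :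
    |rhat h s a - M.r h s a| ≤ b h s a := by
  have : 0 ≤ ((M.H : ℝ) - h) * ∑ s' : S, |phat h s a s' - M.p h s a s'| :=
    mul_nonneg (by simp [hh]) (sum_nonneg fun _ _ => abs_nonneg _)
  linarith [hconc h s a h1 hh]

lemma abs_Vbar_sub_Vlow_le [Nonempty A]
    (hphat_nonneg : ∀ h s a s', 1 ≤ h → h ≤ M.H → 0 ≤ phat h s a s')
    (hphat_sum : ∀ h s a, 1 ≤ h → h ≤ M.H → ∑ s' : S, phat h s a s' = 1)
    (hrhat : ∀ h s a, 1 ≤ h → h ≤ M.H → |rhat h s a - M.r h s a| ≤ b h s a)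
    {h : ℕ} (h1 : 1 ≤ h) (hh : h ≤ M.H + 1) (s : S) :
    |Vbar M rhat phat b h s - Vlow M rhat phat b h s| ≤ (M.H : ℝ) + 1 - h := by
  have hk : M.H + 1 - h ≤ M.H := by omega
  have hcast : ((M.H + 1 - h : ℕ) : ℝ) = (M.H : ℝ) + 1 - h := by
    push_cast [Nat.cast_sub hh]; ring
  rw [Vbar, Vlow, ← hcast]
  refine abs_sub_le_of_nonneg_of_le
    (VbarAux_nonneg hphat_nonneg (fun h s a h1 hh => ?_) hk s) (VbarAux_le M rhat phat b _ s)
    (VlowAux_nonneg M rhat phat b _ s)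
    (VlowAux_le hphat_nonneg hphat_sum (fun h s a h1 hh => ?_) hk s)
  · linarith [(abs_le.1 (hrhat h s a h1 hh)).1, M.r_nonneg h s a h1 hh]
  · linarith [(abs_le.1 (hrhat h s a h1 hh)).2, M.r_le_one h s a h1 hh]

lemma Vbar_sub_Vlow_le [Nonempty A] {h : ℕ} (hh : h ≤ M.H) {s : S} {a : A}
    (hconc : |rhat h s a - M.r h s a| +
      ((M.H : ℝ) - h) * ∑ s' : S, |phat h s a s' - M.p h s a s'| ≤ b h s a)
    (hgreedy : ∀ a', Qbar M rhat phat b h s a' ≤ Qbar M rhat phat b h s a)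
    (hwidth : ∀ s', |Vbar M rhat phat b (h + 1) s' - Vlow M rhat phat b (h + 1) s'| ≤
      (M.H : ℝ) - h) :
    Vbar M rhat phat b h s - Vlow M rhat phat b h s ≤
      3 * b h s a + ∑ s' : S, M.p h s a s' *
        (Vbar M rhat phat b (h + 1) s' - Vlow M rhat phat b (h + 1) s') := by
  have hVbar : Vbar M rhat phat b h s ≤
      rhat h s a + b h s a + ∑ s' : S, phat h s a s' * Vbar M rhat phat b (h + 1) s' := by
    rw [Vbar_eq_iSup_Qbar M rhat phat b hh]
    exact (ciSup_le hgreedy).trans (min_le_right _ _)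
  have hVlow : rhat h s a - b h s a + ∑ s' : S, phat h s a s' * Vlow M rhat phat b (h + 1) s' ≤
      Vlow M rhat phat b h s := by
    rw [Vlow_eq_iSup_Qlow M rhat phat b hh]
    exact le_ciSup_of_le (Finite.bddAbove_range _) a (le_max_right _ _)
  have hshift := sum_mul_le_sum_mul_add_mul_sum_abs_sub univ (q := phat h s a) (p := M.p h s a)
    fun s' _ => hwidth s'
  simp only [mul_sub, sum_sub_distrib] at hshift ⊢
  linarith [abs_nonneg (rhat h s a - M.r h s a)]

end Estimates

end MDP

theorem stopping_threshold_bound_general {S A : Type} [Fintype S] [Fintype A] [Nonempty A]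
    [DecidableEq S] [DecidableEq A] (M : MDP S A)
    (rhat : ℕ → S → A → ℝ) (phat : ℕ → S → A → S → ℝ) (b : ℕ → S → A → ℝ)
    (hphat_nonneg : ∀ h s a s', 1 ≤ h → h ≤ M.H → 0 ≤ phat h s a s')
    (hphat_sum : ∀ h s a, 1 ≤ h → h ≤ M.H → ∑ s' : S, phat h s a s' = 1)
    (hconc : ∀ h s a, 1 ≤ h → h ≤ M.H →
      |rhat h s a - M.r h s a| +
        ((M.H : ℝ) - h) * ∑ s' : S, |phat h s a s' - M.p h s a s'| ≤ b h s a)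
    (π : ℕ → S → A)
    (hgreedy : ∀ h s, 1 ≤ h → h ≤ M.H → ∀ a : A,
      MDP.Qbar M rhat phat b h s a ≤ MDP.Qbar M rhat phat b h s (π h s)) :
    (⨆ a : A, MDP.Qbar M rhat phat b 1 M.s1 a) - (⨆ a : A, MDP.Qlow M rhat phat b 1 M.s1 a) ≤
      3 * ∑ h ∈ Finset.Icc 1 M.H, ∑ s : S, ∑ a : A, M.visitSA π h s a * b h s a := by
  have hbellman : ∀ h s, 1 ≤ h → h ≤ M.H →
      MDP.Vbar M rhat phat b h s - MDP.Vlow M rhat phat b h s ≤ 3 * b h s (π h s) +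
        ∑ s', M.p h s (π h s) s' *
          (MDP.Vbar M rhat phat b (h + 1) s' - MDP.Vlow M rhat phat b (h + 1) s') :=
    fun h s h1 hh => MDP.Vbar_sub_Vlow_le hh (hconc h s _ h1 hh) (hgreedy h s h1 hh) fun s' => by
      simpa using MDP.abs_Vbar_sub_Vlow_le hphat_nonneg hphat_sum
        (fun h s a h1 hh => MDP.abs_rhat_sub_r_le_of_conc hconc h1 hh s a)
        (h := h + 1) (by omega) (by omega) s'
  have htele := M.sum_visit_mul_le_of_bellman_le π _ _
    (fun s => by simp [MDP.Vbar_H_succ, MDP.Vlow_H_succ]) hbellman le_rfl (by omega)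
  rw [M.sum_visit_one_mul π] at htele
  rw [← MDP.Vbar_eq_iSup_Qbar M rhat phat b M.H_pos,
    ← MDP.Vlow_eq_iSup_Qlow M rhat phat b M.H_pos]
  simpa only [M.sum_visitSA_mul π, mul_sum, mul_left_comm] using htele

/-- Deterministic form of the stopping-threshold bound: the width of the confidence interval
at the initial state is bounded by three times the expected sum of bonuses of the policy
greedy w.r.t. the optimistic Q-values. -/
theorem stopping_threshold_bound {S A : Type} [Fintype S] [Nonempty S] [Fintype A] [Nonempty A]
    [DecidableEq S] [DecidableEq A] (M : MDP S A)
    (rhat : ℕ → S → A → ℝ) (phat : ℕ → S → A → S → ℝ) (b : ℕ → S → A → ℝ)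
    (hphat_nonneg : ∀ h s a s', 1 ≤ h → h ≤ M.H → 0 ≤ phat h s a s')
    (hphat_sum : ∀ h s a, 1 ≤ h → h ≤ M.H → ∑ s' : S, phat h s a s' = 1)
    (hb_nonneg : ∀ h s a, 1 ≤ h → h ≤ M.H → 0 ≤ b h s a)
    (hconc : ∀ h s a, 1 ≤ h → h ≤ M.H →
      |rhat h s a - M.r h s a| +
        ((M.H : ℝ) - h) * ∑ s' : S, |phat h s a s' - M.p h s a s'| ≤ b h s a)
    (π : ℕ → S → A)
    (hgreedy : ∀ h s, 1 ≤ h → h ≤ M.H → ∀ a : A,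
      MDP.Qbar M rhat phat b h s a ≤ MDP.Qbar M rhat phat b h s (π h s)) :
    (⨆ a : A, MDP.Qbar M rhat phat b 1 M.s1 a) - (⨆ a : A, MDP.Qlow M rhat phat b 1 M.s1 a) ≤
      3 * ∑ h ∈ Finset.Icc 1 M.H, ∑ s : S, ∑ a : A, M.visitSA π h s a * b h s a :=
  stopping_threshold_bound_general M rhat phat b hphat_nonneg hphat_sum hconc π hgreedy
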